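/- Let β_A, β_H > 0, α_A, α_H > 0 with β_A ≠ β_H, α_A ≠ α_H and β_A/β_H = α_A/α_H (class P_SP,1), let λ ∈ (0,1) and ω₀ ≥ 1, and set q_λ^E := β_A^λ·β_H^{1−λ} (so 0 < q_λ^E < β_λ). Then: (a) H_{λ,1} = exp( (β_A^λ·β_H^{1−λ} − λβ_A − (1−λ)β_H)·(ω₀ + α_A/β_A) ) < 1; (b) H_{λ,n} = exp( a_n^{(q_λ^E)}·ω₀ + (α_A/β_A)·Σ_{k=1}^{n} a_k^{(q_λ^E)} ) for all n ≥ 1, and this sequence is strictly decreasing in n; (c) lim_{n→∞} H_{λ,n} = 0; (d) lim_{n→∞} (1/n)·log H_{λ,n} = (α_A/β_A)·x₀^{(q_λ^E)}. -/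

import Mathlib

open Real Filter

/-- One transition weight of the Poisson Galton–Watson process with immigration:
probability that the next generation size is `y` given the previous size is `x`. -/
noncomputable def gwStep (β α : ℝ) (x y : ℕ) : ℝ :=
  Real.exp (-(β * (x : ℝ) + α)) * (β * (x : ℝ) + α) ^ y / (Nat.factorial y : ℝ)

/-- The `n`-step path law (pmf on `Fin n → ℕ`) with initial generation size `ω₀`. -/
noncomputable def gwPath (β α : ℝ) (ω₀ n : ℕ) (ω : Fin n → ℕ) : ℝ :=
  ∏ k : Fin n,
    gwStep β α
      (if (k : ℕ) = 0 then ω₀ else ω ⟨(k : ℕ) - 1, Nat.lt_of_le_of_lt (Nat.sub_le _ _) k.2⟩)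
      (ω k)

/-- Hellinger integral of order `lam` between the `n`-step path laws. -/
noncomputable def hellinger (βA αA βH αH lam : ℝ) (ω₀ n : ℕ) : ℝ :=
  ∑' ω : Fin n → ℕ, gwPath βA αA ω₀ n ω ^ lam * gwPath βH αH ω₀ n ω ^ (1 - lam)

/-- The recursion `a₀ = 0`, `a_{n+1} = q·e^{a_n} − βl`. -/
noncomputable def aSeq (q βl : ℝ) : ℕ → ℝ
  | 0 => 0
  | n + 1 => q * Real.exp (aSeq q βl n) - βl

/-- The recursion `b₀ = 0`, `b_{n+1} = p·e^{a_n} − αl`. -/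
noncomputable def bSeq (p q βl αl : ℝ) : ℕ → ℝ
  | 0 => 0
  | n + 1 => p * Real.exp (aSeq q βl n) - αl

/-!
Since `β_A / β_H = α_A / α_H`, both offspring means `β_• x + α_•` equal `β_• (x + α_A / β_A)`.
Hence the geometric mean of the two Poisson weights is an unnormalised Poisson weight, and one
generation `y` integrates out of `exp (c y)` to `exp ((q e^c - β_λ) (x + α_A / β_A))` with
`q = β_A^λ β_H^(1-λ)`. Summing a path out from the last generation backwards therefore gives
`H_n = exp (a_n ω₀ + (α_A / β_A) Σ_{k ≤ n} a_k)`. By weighted AM-GM `q < β_λ`, so the `a_n`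
decrease strictly to the unique negative fixed point `x₀` of `x ↦ q e^x - β_λ`, and Cesàro
averaging gives the rate.
-/

open Finset Topology
open scoped Nat

theorem hasSum_prod_of_nonneg {α β : Type*} {f : α × β → ℝ} (hf : 0 ≤ f) {g : α → ℝ} {s : ℝ}
    (hfib : ∀ a, HasSum (fun b => f (a, b)) (g a)) (hg : HasSum g s) : HasSum f s := by
  have hsum : Summable f := (summable_prod_of_nonneg hf).2
    ⟨fun a => (hfib a).summable, by simpa only [(hfib _).tsum_eq] using hg.summable⟩
  simpa only [(hsum.hasSum.prod_fiberwise hfib).unique hg] using hsum.hasSum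

theorem hasSum_exp_neg_mul_pow_div_factorial_mul_exp (m g c : ℝ) :
    HasSum (fun y : ℕ => exp (-m) * g ^ y / y ! * exp (c * y)) (exp (g * exp c - m)) := by
  have h := (NormedSpace.expSeries_div_hasSum_exp (g * exp c)).mul_left (exp (-m))
  rw [← Real.exp_eq_exp_ℝ, ← Real.exp_add, neg_add_eq_sub] at h
  refine h.congr_fun fun y => ?_
  rw [mul_comm c, Real.exp_nat_mul, mul_pow]
  ring

theorem exp_neg_mul_pow_div_factorial_rpow {f : ℝ} (hf : 0 ≤ f) (t : ℝ) (y : ℕ) :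
    (exp (-f) * f ^ y / y !) ^ t = exp (-(t * f)) * (f ^ t) ^ y / (y ! : ℝ) ^ t := by
  rw [Real.div_rpow (by positivity) (by positivity), Real.mul_rpow (by positivity) (by positivity),
    ← Real.exp_mul, ← Real.rpow_natCast f y, ← Real.rpow_mul hf, mul_comm (y : ℝ) t,
    Real.rpow_mul hf, Real.rpow_natCast, neg_mul, mul_comm f t, mul_comm (exp _)]

theorem poisson_rpow_mul_poisson_rpow {f g : ℝ} (hf : 0 ≤ f) (hg : 0 ≤ g) (lam : ℝ) (y : ℕ) :
    (exp (-f) * f ^ y / y !) ^ lam * (exp (-g) * g ^ y / y !) ^ (1 - lam)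
      = exp (-(lam * f + (1 - lam) * g)) * (f ^ lam * g ^ (1 - lam)) ^ y / y ! := by
  have hfac : (y ! : ℝ) ^ lam * (y ! : ℝ) ^ (1 - lam) = y ! := by
    rw [← Real.rpow_add (by positivity), add_sub_cancel, Real.rpow_one]
  rw [exp_neg_mul_pow_div_factorial_rpow hf, exp_neg_mul_pow_div_factorial_rpow hg, neg_add,
    Real.exp_add, mul_pow]
  conv_rhs => rw [← hfac]
  ring

theorem mul_rpow_mul_mul_rpow {a b s : ℝ} (ha : 0 ≤ a) (hb : 0 ≤ b) (hs : 0 ≤ s) (lam : ℝ) :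
    (a * s) ^ lam * (b * s) ^ (1 - lam) = a ^ lam * b ^ (1 - lam) * s := by
  have hss : s ^ lam * s ^ (1 - lam) = s := by
    rw [← Real.rpow_add' hs (by simp), add_sub_cancel, Real.rpow_one]
  rw [Real.mul_rpow ha hs, Real.mul_rpow hb hs]
  linear_combination a ^ lam * b ^ (1 - lam) * hss

noncomputable def pathProd (K : ℕ → ℕ → ℝ) (x n : ℕ) (ω : Fin n → ℕ) : ℝ :=
  ∏ k : Fin n,
    K (if (k : ℕ) = 0 then x else ω ⟨(k : ℕ) - 1, Nat.lt_of_le_of_lt (Nat.sub_le _ _) k.2⟩) (ω k)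

theorem pathProd_nonneg {K : ℕ → ℕ → ℝ} (hK : ∀ x y, 0 ≤ K x y) (x n : ℕ) (ω : Fin n → ℕ) :
    0 ≤ pathProd K x n ω :=
  prod_nonneg fun _ _ => hK _ _

theorem pathProd_cons (K : ℕ → ℕ → ℝ) (x n y : ℕ) (ω : Fin n → ℕ) :
    pathProd K x (n + 1) (Fin.cons y ω) = K x y * pathProd K y n ω := by
  rw [pathProd, Fin.prod_univ_succ]
  congr 1
  refine prod_congr rfl fun k _ => ?_
  simp only [Fin.val_succ, Nat.add_sub_cancel, Nat.succ_ne_zero, if_false, Fin.cons_succ]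
  congr 1
  rcases k with ⟨_ | j, hj⟩
  · rfl
  · exact Fin.cons_succ (α := fun _ => ℕ) y ω ⟨j, by omega⟩

theorem hasSum_pathProd {K : ℕ → ℕ → ℝ} (hK : ∀ x y, 0 ≤ K x y) {F G : ℝ → ℝ}
    (hmgf : ∀ c x, HasSum (fun y : ℕ => K x y * exp (c * y)) (exp (F c * x + G c))) (n x : ℕ) :
    HasSum (pathProd K x n) (exp (F^[n] 0 * x + ∑ k ∈ range n, G (F^[k] 0))) := by
  induction n generalizing x with
  | zero => simpa [pathProd] using hasSum_fintype (pathProd K x 0)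
  | succ n ih =>
    refine (Fin.consEquiv fun _ => ℕ).hasSum_iff.mp ?_
    refine hasSum_prod_of_nonneg (fun _ => pathProd_nonneg hK _ _ _)
      (fun y => by simpa only [Function.comp_apply, Fin.consEquiv, Equiv.coe_fn_mk,
        pathProd_cons] using (ih y).mul_left (K x y)) ?_
    have h := (hmgf (F^[n] 0) x).mul_right (exp (∑ k ∈ range n, G (F^[k] 0)))
    rw [← Real.exp_add, add_assoc, add_comm (G _), ← sum_range_succ,
      ← Function.iterate_succ_apply' F] at h
    exact h.congr_fun fun y => by rw [mul_assoc, ← Real.exp_add]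

theorem gwStep_nonneg {β α : ℝ} (hβ : 0 ≤ β) (hα : 0 ≤ α) (x y : ℕ) : 0 ≤ gwStep β α x y := by
  unfold gwStep
  positivity

noncomputable def hellingerKernel (βA αA βH αH lam : ℝ) (x y : ℕ) : ℝ :=
  gwStep βA αA x y ^ lam * gwStep βH αH x y ^ (1 - lam)

theorem hellingerKernel_nonneg {βA αA βH αH : ℝ} (hβA : 0 ≤ βA) (hαA : 0 ≤ αA) (hβH : 0 ≤ βH)
    (hαH : 0 ≤ αH) (lam : ℝ) (x y : ℕ) : 0 ≤ hellingerKernel βA αA βH αH lam x y :=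
  mul_nonneg (Real.rpow_nonneg (gwStep_nonneg hβA hαA x y) lam)
    (Real.rpow_nonneg (gwStep_nonneg hβH hαH x y) (1 - lam))

theorem hellinger_eq_tsum_pathProd {βA αA βH αH : ℝ} (hβA : 0 ≤ βA) (hαA : 0 ≤ αA)
    (hβH : 0 ≤ βH) (hαH : 0 ≤ αH) (lam : ℝ) (x n : ℕ) :
    hellinger βA αA βH αH lam x n = ∑' ω, pathProd (hellingerKernel βA αA βH αH lam) x n ω := by
  refine tsum_congr fun ω => ?_
  rw [gwPath, gwPath, ← Real.finsetProd_rpow _ _ (fun _ _ => gwStep_nonneg hβA hαA _ _),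
    ← Real.finsetProd_rpow _ _ (fun _ _ => gwStep_nonneg hβH hαH _ _), ← prod_mul_distrib]
  rfl

theorem hasSum_hellingerKernel_mul_exp {βA αA βH αH : ℝ} (hβA : 0 < βA) (hαA : 0 ≤ αA)
    (hβH : 0 < βH) (hαH : 0 < αH) (hratio : βA / βH = αA / αH) (lam c : ℝ) (x : ℕ) :
    HasSum (fun y : ℕ => hellingerKernel βA αA βH αH lam x y * exp (c * y))
      (exp ((βA ^ lam * βH ^ (1 - lam) * exp c - (lam * βA + (1 - lam) * βH))
        * (x + αA / βA))) := by
  set s : ℝ := x + αA / βA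
  have hs : 0 ≤ s := by positivity
  have hA : βA * x + αA = βA * s := by
    simp only [s]
    field_simp
  have hH : βH * x + αH = βH * s := by
    rw [div_eq_div_iff hβH.ne' hαH.ne'] at hratio
    simp only [s]
    field_simp
    linear_combination hratio
  unfold hellingerKernel gwStep
  simp only [hA, hH, poisson_rpow_mul_poisson_rpow (mul_nonneg hβA.le hs) (mul_nonneg hβH.le hs),
    mul_rpow_mul_mul_rpow hβA.le hβH.le hs]
  convert hasSum_exp_neg_mul_pow_div_factorial_mul_exp _ _ c using 2
  ring

theorem aSeq_eq_iterate (q βl : ℝ) (n : ℕ) :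
    aSeq q βl n = (fun a => q * exp a - βl)^[n] 0 := by
  induction n with
  | zero => rfl
  | succ n ih => rw [Function.iterate_succ_apply', ← ih, aSeq]

theorem hellinger_eq_exp {βA αA βH αH : ℝ} (hβA : 0 < βA) (hαA : 0 ≤ αA)
    (hβH : 0 < βH) (hαH : 0 < αH) (hratio : βA / βH = αA / αH) (lam : ℝ) (x n : ℕ) :
    hellinger βA αA βH αH lam x n
      = exp (aSeq (βA ^ lam * βH ^ (1 - lam)) (lam * βA + (1 - lam) * βH) n * x
        + αA / βA * ∑ k ∈ Icc 1 n,
          aSeq (βA ^ lam * βH ^ (1 - lam)) (lam * βA + (1 - lam) * βH) k) := by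
  set F : ℝ → ℝ := fun a => βA ^ lam * βH ^ (1 - lam) * exp a - (lam * βA + (1 - lam) * βH)
  have h := hasSum_pathProd (hellingerKernel_nonneg hβA.le hαA hβH.le hαH.le lam)
    (F := F) (G := fun c => αA / βA * F c)
    (fun c x => by
      rw [← mul_comm (F c), ← mul_add]
      exact hasSum_hellingerKernel_mul_exp hβA hαA hβH hαH hratio lam c x) n x
  rw [hellinger_eq_tsum_pathProd hβA.le hαA hβH.le hαH.le, h.tsum_eq, ← mul_sum,
    ← Ico_add_one_right_eq_Icc, sum_Ico_eq_sum_range]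
  simp only [aSeq_eq_iterate, add_comm 1, Function.iterate_succ_apply', Nat.add_sub_cancel]
  rfl

section FixedPoint

variable {q βl : ℝ}

theorem aSeq_strictAnti (hq : 0 < q) (hqβ : q < βl) : StrictAnti (aSeq q βl) := by
  refine strictAnti_nat_of_succ_lt fun n => ?_
  induction n with
  | zero => simpa [aSeq] using hqβ
  | succ n ih =>
    show q * exp (aSeq q βl (n + 1)) - βl < q * exp (aSeq q βl n) - βl
    gcongr

theorem lt_aSeq_of_fixedPoint (hq : 0 < q) {x₀ : ℝ} (hx₀ : x₀ < 0) (hfix : q * exp x₀ - βl = x₀)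
    (n : ℕ) : x₀ < aSeq q βl n := by
  induction n with
  | zero => exact hx₀
  | succ n ih =>
    show x₀ < q * exp (aSeq q βl n) - βl
    rw [← hfix]
    gcongr

theorem eq_of_fixedPoint_of_le (hq : 0 < q) (hqβ : q < βl) {x y : ℝ} (hxy : x ≤ y) (hy : y < 0)
    (hfx : q * exp x - βl = x) (hfy : q * exp y - βl = y) : x = y := by
  by_contra hne
  have hx : x < 0 := (lt_of_le_of_ne hxy hne).trans hy
  set t := y / x
  have hty : t * x = y := div_mul_cancel₀ y hx.ne
  have ht0 : 0 < t := div_pos_of_neg_of_neg hy hx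
  have ht1 : t < 1 := (div_lt_one_of_neg hx).2 (lt_of_le_of_ne hxy hne)
  -- `y = t • x + (1 - t) • 0`: by strict convexity the graph of `q e^· - βl` lies below the
  -- chord through the fixed point `x` and `(0, q - βl)`, which lies strictly below the diagonal
  have hconv := strictConvexOn_exp.2 (Set.mem_univ x) (Set.mem_univ 0) hx.ne ht0
    (sub_pos.2 ht1) (by ring)
  simp only [smul_eq_mul, mul_zero, add_zero, Real.exp_zero, mul_one, hty] at hconv
  nlinarith [mul_lt_mul_of_pos_left hconv hq, mul_pos (sub_pos.2 ht1) (sub_pos.2 hqβ)]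

theorem tendsto_aSeq_fixedPoint (hq : 0 < q) (hqβ : q < βl) {x₀ : ℝ} (hx₀ : x₀ < 0)
    (hfix : q * exp x₀ - βl = x₀) : Tendsto (aSeq q βl) atTop (𝓝 x₀) := by
  have hbdd : BddBelow (Set.range (aSeq q βl)) :=
    ⟨x₀, by rintro _ ⟨n, rfl⟩; exact (lt_aSeq_of_fixedPoint hq hx₀ hfix n).le⟩
  have hL := tendsto_atTop_ciInf (aSeq_strictAnti hq hqβ).antitone hbdd
  have hfixL : q * exp (⨅ n, aSeq q βl n) - βl = ⨅ n, aSeq q βl n :=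
    tendsto_nhds_unique ((((continuous_exp.tendsto _).comp hL).const_mul q).sub_const βl)
      (hL.comp (tendsto_add_atTop_nat 1))
  have hLneg : ⨅ n, aSeq q βl n < 0 :=
    (ciInf_le hbdd 1).trans_lt (aSeq_strictAnti hq hqβ zero_lt_one)
  rwa [← eq_of_fixedPoint_of_le hq hqβ (le_ciInf fun n => (lt_aSeq_of_fixedPoint hq hx₀ hfix n).le)
    hLneg hfix hfixL] at hL

end FixedPoint

theorem strictAnti_mul_add_mul_sum_Icc {a : ℕ → ℝ} (ha : StrictAnti a) (ha0 : a 0 = 0) {c r : ℝ}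
    (hc : 0 ≤ c) (hr : 0 < r) : StrictAnti fun n => a n * c + r * ∑ k ∈ Icc 1 n, a k := by
  refine strictAnti_nat_of_succ_lt fun n => ?_
  have hsucc : a (n + 1) < a n := ha n.lt_succ_self
  have hneg : a (n + 1) < 0 := ha0 ▸ ha n.succ_pos
  simp only [sum_Icc_succ_top (Nat.le_add_left 1 n)]
  nlinarith [mul_le_mul_of_nonneg_right hsucc.le hc]

theorem tendsto_inv_mul_add_mul_sum_Icc {a : ℕ → ℝ} {l : ℝ} (ha : Tendsto a atTop (𝓝 l))
    (c r : ℝ) :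
    Tendsto (fun n : ℕ => 1 / (n : ℝ) * (a n * c + r * ∑ k ∈ Icc 1 n, a k)) atTop (𝓝 (r * l)) := by
  have hces : Tendsto (fun n : ℕ => 1 / (n : ℝ) * ∑ k ∈ Icc 1 n, a k) atTop (𝓝 l) := by
    refine (ha.comp (tendsto_add_atTop_nat 1)).cesaro.congr fun n => ?_
    rw [← Ico_add_one_right_eq_Icc, sum_Ico_eq_sum_range]
    simp [one_div, add_comm]
  have hvan : Tendsto (fun n : ℕ => 1 / (n : ℝ) * (a n * c)) atTop (𝓝 0) := by
    simpa using tendsto_one_div_atTop_nhds_zero_nat.mul (ha.mul_const c)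
  simpa [mul_add, mul_left_comm] using hvan.add (hces.const_mul r)

theorem tendsto_atBot_of_tendsto_inv_mul {u : ℕ → ℝ} {l : ℝ} (hl : l < 0)
    (h : Tendsto (fun n : ℕ => 1 / (n : ℝ) * u n) atTop (𝓝 l)) : Tendsto u atTop atBot := by
  refine (tendsto_natCast_atTop_atTop.atTop_mul_neg hl h).congr' ?_
  filter_upwards [eventually_ne_atTop 0] with n hn
  field_simp

theorem hellinger_SP1_detailed_general (βA βH αA αH lam : ℝ)
    (hβA : 0 < βA) (hβH : 0 < βH) (hαA : 0 < αA) (hαH : 0 < αH)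
    (hβne : βA ≠ βH) (hratio : βA / βH = αA / αH)
    (hlam : lam ∈ Set.Ioo (0 : ℝ) 1) (ω₀ : ℕ)
    (qE βl : ℝ) (hqE : qE = βA ^ lam * βH ^ (1 - lam)) (hβl : βl = lam * βA + (1 - lam) * βH)
    (x₀ : ℝ) (hx₀neg : x₀ < 0) (hx₀fix : qE * Real.exp x₀ - βl = x₀) :
    (0 < qE ∧ qE < βl) ∧
    (hellinger βA αA βH αH lam ω₀ 1
        = Real.exp ((βA ^ lam * βH ^ (1 - lam) - lam * βA - (1 - lam) * βH)
            * ((ω₀ : ℝ) + αA / βA)) ∧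
      hellinger βA αA βH αH lam ω₀ 1 < 1) ∧
    (∀ n : ℕ, 1 ≤ n →
      hellinger βA αA βH αH lam ω₀ n
        = Real.exp (aSeq qE βl n * (ω₀ : ℝ) + (αA / βA) * ∑ k ∈ Finset.Icc 1 n, aSeq qE βl k)) ∧
    (∀ n : ℕ, 1 ≤ n → hellinger βA αA βH αH lam ω₀ (n + 1) < hellinger βA αA βH αH lam ω₀ n) ∧
    Tendsto (fun n : ℕ => hellinger βA αA βH αH lam ω₀ n) atTop (nhds 0) ∧
    Tendsto (fun n : ℕ => (1 / (n : ℝ)) * Real.log (hellinger βA αA βH αH lam ω₀ n)) atTop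
      (nhds ((αA / βA) * x₀)) := by
  obtain ⟨hlam0, hlam1⟩ := hlam
  subst hqE hβl
  have hq : 0 < βA ^ lam * βH ^ (1 - lam) := by positivity
  have hqβ := (Real.geom_mean_lt_arith_mean2_weighted_iff_of_pos hlam0 (sub_pos.2 hlam1)
    hβA.le hβH.le (by ring)).2 hβne
  have hr : 0 < αA / βA := by positivity
  have formula := hellinger_eq_exp hβA hαA.le hβH hαH hratio lam ω₀
  have hanti : StrictAnti (hellinger βA αA βH αH lam ω₀) := by
    simpa only [Function.comp_def, ← formula] using Real.exp_strictMono.comp_strictAnti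
      (strictAnti_mul_add_mul_sum_Icc (aSeq_strictAnti hq hqβ) rfl ω₀.cast_nonneg hr)
  have hrate := tendsto_inv_mul_add_mul_sum_Icc (tendsto_aSeq_fixedPoint hq hqβ hx₀neg hx₀fix)
    (ω₀ : ℝ) (αA / βA)
  refine ⟨⟨hq, hqβ⟩, ⟨?_, ?_⟩, fun n _ => formula n, fun n _ => hanti n.lt_succ_self, ?_, ?_⟩
  · rw [formula]
    congr 1
    simp only [aSeq, Icc_self, sum_singleton, Real.exp_zero, mul_one]
    ring
  · simpa [formula 0, aSeq] using hanti zero_lt_one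
  · simpa only [formula, Function.comp_def] using Real.tendsto_exp_atBot.comp
      (tendsto_atBot_of_tendsto_inv_mul (mul_neg_of_pos_of_neg hr hx₀neg) hrate)
  · simpa only [formula, Real.log_exp] using hrate

/-- Detailed behaviour of the Hellinger integrals in the equal-fraction case
`P_SP,1` (strictly positive parameters, `β_A ≠ β_H`, `α_A ≠ α_H`, `β_A/β_H = α_A/α_H`):
exact value, strict decrease, vanishing limit, and exponential decay rate `(α_A/β_A)·x₀`. -/
theorem hellinger_SP1_detailed (βA βH αA αH lam : ℝ)
    (hβA : 0 < βA) (hβH : 0 < βH) (hαA : 0 < αA) (hαH : 0 < αH)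
    (hβne : βA ≠ βH) (hαne : αA ≠ αH) (hratio : βA / βH = αA / αH)
    (hlam : lam ∈ Set.Ioo (0 : ℝ) 1) (ω₀ : ℕ) (hω₀ : 1 ≤ ω₀)
    (qE βl : ℝ) (hqE : qE = βA ^ lam * βH ^ (1 - lam)) (hβl : βl = lam * βA + (1 - lam) * βH)
    (x₀ : ℝ) (hx₀neg : x₀ < 0) (hx₀fix : qE * Real.exp x₀ - βl = x₀) :
    (0 < qE ∧ qE < βl) ∧
    (hellinger βA αA βH αH lam ω₀ 1
        = Real.exp ((βA ^ lam * βH ^ (1 - lam) - lam * βA - (1 - lam) * βH)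
            * ((ω₀ : ℝ) + αA / βA)) ∧
      hellinger βA αA βH αH lam ω₀ 1 < 1) ∧
    (∀ n : ℕ, 1 ≤ n →
      hellinger βA αA βH αH lam ω₀ n
        = Real.exp (aSeq qE βl n * (ω₀ : ℝ) + (αA / βA) * ∑ k ∈ Finset.Icc 1 n, aSeq qE βl k)) ∧
    (∀ n : ℕ, 1 ≤ n → hellinger βA αA βH αH lam ω₀ (n + 1) < hellinger βA αA βH αH lam ω₀ n) ∧
    Tendsto (fun n : ℕ => hellinger βA αA βH αH lam ω₀ n) atTop (nhds 0) ∧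
    Tendsto (fun n : ℕ => (1 / (n : ℝ)) * Real.log (hellinger βA αA βH αH lam ω₀ n)) atTop
      (nhds ((αA / βA) * x₀)) :=
  hellinger_SP1_detailed_general βA βH αA αH lam hβA hβH hαA hαH hβne hratio hlam ω₀ qE βl hqE hβl
    x₀ hx₀neg hx₀fix
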